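/- Let Γ = {y ∈ ℝ² : y₂ ≥ y₁}, F : ℝ → ℝ² given by F(x) = (x, sin x), and x̄ = 0. Then MSCQ fails at x̄: for x_k = 1/k one has d_{F^{-1}(Γ)}(x_k) = x_k while d_Γ(F(x_k)) ≤ (x_k − sin x_k)/√2 = o(x_k), so no constant κ and neighborhood of 0 satisfy d_{F^{-1}(Γ)}(x) ≤ κ d_Γ(F(x)). -/

import Mathlib

/-!
The preimage `F⁻¹(Γ) = {x | x ≤ sin x}` is `(-∞, 0]`, so a point `x > 0` lies at distance
`x` from it. On the other hand `F x = (x, sin x)` lies at distance at most `(x - sin x) / √2` from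
`Γ` (project onto the diagonal), and `x - sin x = o(x)` because `sin' 0 = 1`. Hence no bound
`x ≤ κ d_Γ(F x)` can hold for small `x > 0`.
-/

open Set Filter Topology Metric

noncomputable section

/-- The vector `(a, b)` in the Euclidean plane. -/
def v2 (a b : ℝ) : EuclideanSpace ℝ (Fin 2) :=
  (WithLp.equiv 2 (Fin 2 → ℝ)).symm ![a, b]

/-- `Γ = {y ∈ ℝ² : y₂ ≥ y₁}`. -/
def Gamma13 : Set (EuclideanSpace ℝ (Fin 2)) :=
  {y | y 0 ≤ y 1}

/-- `F(x) = (x, sin x)`. -/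
def F13 (x : ℝ) : EuclideanSpace ℝ (Fin 2) := v2 x (Real.sin x)

lemma Real.self_le_sin_iff {x : ℝ} : x ≤ Real.sin x ↔ x ≤ 0 :=
  ⟨fun h => not_lt.1 fun hx => (Real.sin_lt hx).not_ge h, Real.le_sin⟩

lemma Real.isLittleO_self_sub_sin : (fun x => x - Real.sin x) =o[𝓝 0] fun x => x := by
  simpa using (Real.hasDerivAt_sin 0).isLittleO.neg_left

lemma Real.infDist_Iic {a x : ℝ} (h : a ≤ x) : infDist x (Iic a) = x - a := by
  refine le_antisymm ?_ ((le_infDist nonempty_Iic).2 fun y (hy : y ≤ a) => ?_)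
  · simpa [Real.dist_eq, abs_of_nonneg (sub_nonneg.2 h)] using
      infDist_le_dist_of_mem (x := x) (self_mem_Iic : a ∈ Iic a)
  · rw [Real.dist_eq]
    linarith [le_abs_self (x - y)]

lemma dist_v2 (a b c d : ℝ) : dist (v2 a b) (v2 c d) = √((a - c) ^ 2 + (b - d) ^ 2) := by
  simp [EuclideanSpace.dist_eq, v2, Fin.sum_univ_two, Real.dist_eq, sq_abs]

lemma infDist_v2_Gamma13_le {a b : ℝ} (h : b ≤ a) :
    infDist (v2 a b) Gamma13 ≤ (a - b) / √2 := by
  have hm : v2 ((a + b) / 2) ((a + b) / 2) ∈ Gamma13 := le_refl (v2 ((a + b) / 2) ((a + b) / 2) 0)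
  calc infDist (v2 a b) Gamma13 ≤ dist (v2 a b) (v2 ((a + b) / 2) ((a + b) / 2)) :=
        infDist_le_dist_of_mem hm
    _ = √((a - b) ^ 2 / 2) := by rw [dist_v2]; ring_nf
    _ = (a - b) / √2 := by rw [Real.sqrt_div (sq_nonneg _), Real.sqrt_sq (sub_nonneg.2 h)]

lemma preimage_F13_Gamma13 : F13 ⁻¹' Gamma13 = Iic 0 :=
  ext fun _ => Real.self_le_sin_iff

lemma infDist_preimage_F13_Gamma13 {x : ℝ} (hx : 0 ≤ x) :
    infDist x (F13 ⁻¹' Gamma13) = x := by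
  rw [preimage_F13_Gamma13, Real.infDist_Iic hx, sub_zero]

lemma infDist_F13_Gamma13_le {x : ℝ} (hx : 0 ≤ x) :
    infDist (F13 x) Gamma13 ≤ (x - Real.sin x) / √2 :=
  infDist_v2_Gamma13_le (Real.sin_le hx)

lemma not_exists_infDist_preimage_le_mul_infDist :
    ¬ ∃ U ∈ 𝓝 (0 : ℝ), ∃ κ > (0 : ℝ), ∀ x ∈ U,
        infDist x (F13 ⁻¹' Gamma13) ≤ κ * infDist (F13 x) Gamma13 := by
  rintro ⟨U, hU, κ, hκ, hmscq⟩
  have hsmall := Real.isLittleO_self_sub_sin.def (inv_pos.2 (mul_pos two_pos hκ))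
  obtain ⟨x, ⟨hxU, hx : ‖x - Real.sin x‖ ≤ (2 * κ)⁻¹ * ‖x‖⟩, hx0 : 0 < x⟩ :=
    Filter.nonempty_of_mem <| inter_mem
      (mem_nhdsWithin_of_mem_nhds (inter_mem hU hsmall)) (self_mem_nhdsWithin (s := Ioi 0))
  rw [Real.norm_of_nonneg (sub_nonneg.2 (Real.sin_le hx0.le)), Real.norm_of_nonneg hx0.le] at hx
  have : x ≤ x / 2 := calc
    x = infDist x (F13 ⁻¹' Gamma13) := (infDist_preimage_F13_Gamma13 hx0.le).symm
    _ ≤ κ * infDist (F13 x) Gamma13 := hmscq x hxU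
    _ ≤ κ * (x - Real.sin x) := by
      gcongr
      exact (infDist_F13_Gamma13_le hx0.le).trans
        (div_le_self (sub_nonneg.2 (Real.sin_le hx0.le)) Real.one_lt_sqrt_two.le)
    _ ≤ κ * ((2 * κ)⁻¹ * x) := by gcongr
    _ = x / 2 := by field_simp
  linarith

theorem stmt13 :
    (∀ k : ℕ, 0 < k →
      Metric.infDist (1 / (k : ℝ)) (F13 ⁻¹' Gamma13) = 1 / (k : ℝ) ∧
      Metric.infDist (F13 (1 / (k : ℝ))) Gamma13 ≤
        (1 / (k : ℝ) - Real.sin (1 / (k : ℝ))) / Real.sqrt 2) ∧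
    ¬ ∃ U ∈ 𝓝 (0 : ℝ), ∃ κ > (0 : ℝ), ∀ x ∈ U,
        Metric.infDist x (F13 ⁻¹' Gamma13) ≤ κ * Metric.infDist (F13 x) Gamma13 := by
  refine ⟨fun k _ => ?_, not_exists_infDist_preimage_le_mul_infDist⟩
  have hk : (0 : ℝ) ≤ 1 / k := by positivity
  exact ⟨infDist_preimage_F13_Gamma13 hk, infDist_F13_Gamma13_le hk⟩
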